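/- (Uniform Hessian deviation bound used in the matrix sensing application.) Let Y and M be N×N real symmetric matrices and set Δ = Y − M. Then for every X ∈ St(N,r) and every U ∈ ℝ^{N×r} with ‖U‖_F ≤ 1, |hess f(X)[U,U] − hess g(X)[U,U]| = |⟨Xᵀ Δ X, Uᵀ U N_r⟩ − ⟨Δ, U N_r Uᵀ⟩| ≤ 2 r^{3/2} ‖Y − M‖, where ‖·‖ denotes the spectral norm. -/

import Mathlib

/-! Both Hessian forms are linear in the matrix, so their difference is the form of
`Δ = Y - M`. Each of its two terms is a trace inner product which, after moving one
factor across, Cauchy–Schwarz bounds by Frobenius norms: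
`⟨XᵀΔX, UᵀU N_r⟩ = ⟨ΔX, X UᵀU N_r⟩` with `X` an isometry, and
`⟨Δ, U N_r Uᵀ⟩ = ⟨ΔU, U N_r⟩`. Then `‖ΔB‖_F ≤ ‖Δ‖ ‖B‖_F`, `‖X‖_F = √r` and
`‖B N_r‖_F ≤ r ‖B‖_F` bound the two terms by `r^{3/2} ‖Δ‖` and `r ‖Δ‖`. -/

open Matrix

/-- The diagonal weight matrix `N_r = diag(r, r−1, …, 1)`. -/
noncomputable def Nr (r : ℕ) : Matrix (Fin r) (Fin r) ℝ :=
  Matrix.diagonal fun j => (r : ℝ) - (j : ℕ)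

/-- The trace inner product `⟨A, B⟩ = ∑_{ij} A_{ij} B_{ij}`. -/
def tip {m n : ℕ} (A B : Matrix (Fin m) (Fin n) ℝ) : ℝ :=
  ∑ i, ∑ j, A i j * B i j

/-- The spectral norm (ℓ₂ operator norm) of a square matrix. -/
noncomputable def spec {N : ℕ} (A : Matrix (Fin N) (Fin N) ℝ) : ℝ :=
  ‖LinearMap.toContinuousLinearMap (Matrix.toEuclideanLin A)‖

open scoped Matrix.Norms.Frobenius

theorem spec_nonneg {N : ℕ} (A : Matrix (Fin N) (Fin N) ℝ) : 0 ≤ spec A := norm_nonneg _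

section TraceInner

variable {m n k : ℕ}

theorem tip_eq_inner (A B : Matrix (Fin m) (Fin n) ℝ) :
    tip A B = inner ℝ (WithLp.toLp 2 fun i => WithLp.toLp 2 (A i))
      (WithLp.toLp 2 fun i => WithLp.toLp 2 (B i)) := by
  simp [tip, PiLp.inner_apply, mul_comm]

theorem abs_tip_le (A B : Matrix (Fin m) (Fin n) ℝ) : |tip A B| ≤ ‖A‖ * ‖B‖ := by
  rw [tip_eq_inner]
  exact abs_real_inner_le_norm _ _

theorem tip_self (A : Matrix (Fin m) (Fin n) ℝ) : tip A A = ‖A‖ ^ 2 := by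
  rw [tip_eq_inner, real_inner_self_eq_norm_sq]
  rfl

theorem tip_sub_left (A B C : Matrix (Fin m) (Fin n) ℝ) :
    tip (A - B) C = tip A C - tip B C := by
  simp [tip, sub_mul, Finset.sum_sub_distrib]

theorem tip_eq_trace (A B : Matrix (Fin m) (Fin n) ℝ) : tip A B = trace (Aᵀ * B) := by
  rw [tip, Finset.sum_comm]
  simp [trace, mul_apply]

theorem tip_transpose_mul_left (A : Matrix (Fin m) (Fin n) ℝ) (B : Matrix (Fin m) (Fin k) ℝ)
    (C : Matrix (Fin n) (Fin k) ℝ) : tip (Aᵀ * B) C = tip B (A * C) := by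
  rw [tip_eq_trace, tip_eq_trace, transpose_mul, transpose_transpose, Matrix.mul_assoc]

theorem tip_mul_transpose_right (A : Matrix (Fin m) (Fin n) ℝ) (B : Matrix (Fin m) (Fin k) ℝ)
    (C : Matrix (Fin n) (Fin k) ℝ) : tip A (B * Cᵀ) = tip (A * C) B := by
  rw [tip_eq_trace, tip_eq_trace, transpose_mul, ← Matrix.mul_assoc, trace_mul_comm,
    Matrix.mul_assoc]

end TraceInner

section FrobeniusNorm

variable {m n k : ℕ}

theorem frobenius_norm_eq_sqrt (A : Matrix (Fin m) (Fin n) ℝ) :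
    ‖A‖ = √(∑ i, ∑ j, A i j ^ 2) := by
  rw [← Real.sqrt_sq (norm_nonneg A), ← tip_self]
  simp [tip, sq]

theorem frobenius_norm_sq_eq_sum_col (B : Matrix (Fin m) (Fin n) ℝ) :
    ‖B‖ ^ 2 = ∑ j, ‖(WithLp.toLp 2 (Bᵀ j) : EuclideanSpace ℝ (Fin m))‖ ^ 2 := by
  rw [← frobenius_norm_transpose]
  change ‖(WithLp.toLp 2 fun j =>
    (WithLp.toLp 2 (Bᵀ j) : EuclideanSpace ℝ (Fin m)))‖ ^ 2 = _
  exact PiLp.norm_sq_eq_of_L2 _ _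

theorem frobenius_norm_of_transpose_mul_self_eq_one {X : Matrix (Fin m) (Fin n) ℝ}
    (hX : Xᵀ * X = 1) : ‖X‖ = √n := by
  rw [← Real.sqrt_sq (norm_nonneg X), ← tip_self, tip_eq_trace, hX, trace_one, Fintype.card_fin]

theorem frobenius_norm_mul_of_transpose_mul_self_eq_one {X : Matrix (Fin m) (Fin n) ℝ}
    (hX : Xᵀ * X = 1) (C : Matrix (Fin n) (Fin k) ℝ) : ‖X * C‖ = ‖C‖ := by
  rw [← sq_eq_sq₀ (norm_nonneg _) (norm_nonneg _), ← tip_self, ← tip_self,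
    ← tip_transpose_mul_left, ← Matrix.mul_assoc, hX, Matrix.one_mul]

theorem frobenius_norm_mul_le_spec_mul (A : Matrix (Fin m) (Fin m) ℝ)
    (B : Matrix (Fin m) (Fin n) ℝ) : ‖A * B‖ ≤ spec A * ‖B‖ := by
  have hcol : ∀ j, ‖(WithLp.toLp 2 ((A * B)ᵀ j) : EuclideanSpace ℝ (Fin m))‖ ≤
      spec A * ‖(WithLp.toLp 2 (Bᵀ j) : EuclideanSpace ℝ (Fin m))‖ := fun j => by
    have hAB : (A * B)ᵀ j = A *ᵥ Bᵀ j := by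
      ext i
      simp [mul_apply, mulVec, dotProduct]
    rw [hAB]
    exact (LinearMap.toContinuousLinearMap (toEuclideanLin A)).le_opNorm (WithLp.toLp 2 _)
  refine (sq_le_sq₀ (norm_nonneg _) (mul_nonneg (spec_nonneg A) (norm_nonneg B))).mp ?_
  rw [mul_pow, frobenius_norm_sq_eq_sum_col, frobenius_norm_sq_eq_sum_col, Finset.mul_sum]
  gcongr with j
  rw [← mul_pow]
  exact pow_le_pow_left₀ (norm_nonneg _) (hcol j) 2

theorem frobenius_norm_mul_diagonal_le (A : Matrix (Fin m) (Fin n) ℝ) (d : Fin n → ℝ) :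
    ‖A * diagonal d‖ ≤ ‖d‖ * ‖A‖ := by
  refine (sq_le_sq₀ (norm_nonneg _) (by positivity)).mp ?_
  rw [mul_pow, ← tip_self, ← tip_self, tip, tip, Finset.mul_sum]
  gcongr with i _
  rw [Finset.mul_sum]
  refine Finset.sum_le_sum fun j _ => ?_
  have hd : d j ^ 2 ≤ ‖d‖ ^ 2 := by
    rw [← sq_abs, ← Real.norm_eq_abs]
    exact pow_le_pow_left₀ (norm_nonneg _) (norm_le_pi_norm d j) 2
  calc (A * diagonal d) i j * (A * diagonal d) i j = d j ^ 2 * (A i j * A i j) := by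
        rw [mul_diagonal]; ring
    _ ≤ ‖d‖ ^ 2 * (A i j * A i j) := by gcongr; exact mul_self_nonneg _

theorem frobenius_norm_mul_Nr_le {r : ℕ} (A : Matrix (Fin m) (Fin r) ℝ) :
    ‖A * Nr r‖ ≤ r * ‖A‖ := by
  refine (frobenius_norm_mul_diagonal_le A _).trans
    (mul_le_mul_of_nonneg_right ?_ (norm_nonneg A))
  refine pi_norm_le_iff_of_nonneg (Nat.cast_nonneg r) |>.mpr fun j => ?_
  have hj : ((j : ℕ) : ℝ) < r := by exact_mod_cast j.2
  rw [Real.norm_eq_abs, abs_of_pos (by linarith)]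
  linarith [(Nat.cast_nonneg (j : ℕ) : (0 : ℝ) ≤ _)]

end FrobeniusNorm

section HessianDeviation

variable {N r : ℕ}

theorem abs_tip_transpose_mul_mul_le (A : Matrix (Fin N) (Fin N) ℝ)
    {X : Matrix (Fin N) (Fin r) ℝ} (hX : Xᵀ * X = 1) (U : Matrix (Fin N) (Fin r) ℝ) :
    |tip (Xᵀ * A * X) (Uᵀ * U * Nr r)| ≤ r * √r * spec A * ‖U‖ ^ 2 := by
  have hAX : ‖A * X‖ ≤ spec A * √r := by
    simpa only [frobenius_norm_of_transpose_mul_self_eq_one hX] using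
      frobenius_norm_mul_le_spec_mul A X
  have hUU : ‖Uᵀ * U * Nr r‖ ≤ r * (‖U‖ * ‖U‖) :=
    calc ‖Uᵀ * U * Nr r‖ ≤ r * ‖Uᵀ * U‖ := frobenius_norm_mul_Nr_le _
      _ ≤ r * (‖U‖ * ‖U‖) := by
        grw [frobenius_norm_mul, frobenius_norm_transpose]
  calc |tip (Xᵀ * A * X) (Uᵀ * U * Nr r)| = |tip (A * X) (X * (Uᵀ * U * Nr r))| := by
        rw [Matrix.mul_assoc Xᵀ, tip_transpose_mul_left]
    _ ≤ ‖A * X‖ * ‖Uᵀ * U * Nr r‖ := by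
        rw [← frobenius_norm_mul_of_transpose_mul_self_eq_one hX (Uᵀ * U * Nr r)]
        exact abs_tip_le _ _
    _ ≤ (spec A * √r) * (r * (‖U‖ * ‖U‖)) := by
        gcongr
        exact mul_nonneg (spec_nonneg A) (Real.sqrt_nonneg _)
    _ = r * √r * spec A * ‖U‖ ^ 2 := by ring

theorem abs_tip_mul_Nr_mul_transpose_le (A : Matrix (Fin N) (Fin N) ℝ)
    (U : Matrix (Fin N) (Fin r) ℝ) :
    |tip A (U * Nr r * Uᵀ)| ≤ r * spec A * ‖U‖ ^ 2 :=
  calc |tip A (U * Nr r * Uᵀ)| = |tip (A * U) (U * Nr r)| := by rw [tip_mul_transpose_right]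
    _ ≤ ‖A * U‖ * ‖U * Nr r‖ := abs_tip_le _ _
    _ ≤ (spec A * ‖U‖) * (r * ‖U‖) := by
        gcongr
        · exact mul_nonneg (spec_nonneg A) (norm_nonneg U)
        · exact frobenius_norm_mul_le_spec_mul A U
        · exact frobenius_norm_mul_Nr_le U
    _ = r * spec A * ‖U‖ ^ 2 := by ring

end HessianDeviation

theorem stmt_16_general {N r : ℕ} (Y M : Matrix (Fin N) (Fin N) ℝ)
    (X : Matrix (Fin N) (Fin r) ℝ) (hX : Xᵀ * X = 1)
    (U : Matrix (Fin N) (Fin r) ℝ) (hU : Real.sqrt (∑ i, ∑ j, U i j ^ 2) ≤ 1) :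
    (tip (Xᵀ * Y * X) (Uᵀ * U * Nr r) - tip Y (U * Nr r * Uᵀ))
      - (tip (Xᵀ * M * X) (Uᵀ * U * Nr r) - tip M (U * Nr r * Uᵀ)) =
      tip (Xᵀ * (Y - M) * X) (Uᵀ * U * Nr r) - tip (Y - M) (U * Nr r * Uᵀ) ∧
    |tip (Xᵀ * (Y - M) * X) (Uᵀ * U * Nr r) - tip (Y - M) (U * Nr r * Uᵀ)| ≤
      2 * (r : ℝ) ^ ((3 : ℝ)/2) * spec (Y - M) := by
  refine ⟨by rw [Matrix.mul_sub, Matrix.sub_mul, tip_sub_left, tip_sub_left]; ring, ?_⟩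
  have hU2 : ‖U‖ ^ 2 ≤ 1 := pow_le_one₀ (norm_nonneg U) (by rwa [frobenius_norm_eq_sqrt])
  have hr32 : (r : ℝ) ^ ((3 : ℝ) / 2) = r * √r := by
    rw [show (3 : ℝ) / 2 = 1 + 1 / 2 by norm_num,
      Real.rpow_add' (Nat.cast_nonneg r) (by norm_num), Real.rpow_one, Real.sqrt_eq_rpow]
  have hr : (r : ℝ) ≤ r * √r := by
    rcases r.eq_zero_or_pos with rfl | hr
    · simp
    · exact le_mul_of_one_le_right (Nat.cast_nonneg r)
        (Real.one_le_sqrt.mpr (by exact_mod_cast hr))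
  set s := spec (Y - M)
  have hs : 0 ≤ s := spec_nonneg _
  calc _ ≤ |tip (Xᵀ * (Y - M) * X) (Uᵀ * U * Nr r)| + |tip (Y - M) (U * Nr r * Uᵀ)| :=
        abs_sub _ _
    _ ≤ r * √r * s * ‖U‖ ^ 2 + r * s * ‖U‖ ^ 2 :=
        add_le_add (abs_tip_transpose_mul_mul_le _ hX U) (abs_tip_mul_Nr_mul_transpose_le _ U)
    _ ≤ r * √r * s + r * √r * s :=
        add_le_add (mul_le_of_le_one_right (mul_nonneg (by positivity) hs) hU2)
          ((mul_le_of_le_one_right (mul_nonneg (Nat.cast_nonneg r) hs) hU2).trans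
            (mul_le_mul_of_nonneg_right hr hs))
    _ = 2 * (r : ℝ) ^ ((3 : ℝ) / 2) * s := by rw [hr32]; ring

/-- uniform Hessian deviation bound, matrix sensing: for symmetric
`Y`, `M`, `Δ = Y − M`, every `X ∈ St(N,r)` and every `U` with `‖U‖_F ≤ 1`,
`|hess f(X)[U,U] − hess g(X)[U,U]| = |⟨Xᵀ Δ X, Uᵀ U N_r⟩ − ⟨Δ, U N_r Uᵀ⟩|
  ≤ 2 r^{3/2} ‖Y − M‖` (spectral norm). -/
theorem stmt_16 {N r : ℕ} (Y M : Matrix (Fin N) (Fin N) ℝ)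
    (hY : Y.IsSymm) (hM : M.IsSymm)
    (X : Matrix (Fin N) (Fin r) ℝ) (hX : Xᵀ * X = 1)
    (U : Matrix (Fin N) (Fin r) ℝ) (hU : Real.sqrt (∑ i, ∑ j, U i j ^ 2) ≤ 1) :
    (tip (Xᵀ * Y * X) (Uᵀ * U * Nr r) - tip Y (U * Nr r * Uᵀ))
      - (tip (Xᵀ * M * X) (Uᵀ * U * Nr r) - tip M (U * Nr r * Uᵀ)) =
      tip (Xᵀ * (Y - M) * X) (Uᵀ * U * Nr r) - tip (Y - M) (U * Nr r * Uᵀ) ∧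
    |tip (Xᵀ * (Y - M) * X) (Uᵀ * U * Nr r) - tip (Y - M) (U * Nr r * Uᵀ)| ≤
      2 * (r : ℝ) ^ ((3 : ℝ)/2) * spec (Y - M) :=
  stmt_16_general Y M X hX U hU
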